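/- arXiv:1610.08496 — 4 statements merged into one kernel-verified Lean document; each statement's English description precedes it below -/
import Mathlib

section
/- For the n-cycle C_n (n ≥ 3), the internal energy per particle satisfies U_{C_n}^q(β) = [λ/(λ−1)] · [( (1+q/(λ−1))^{n−1} + q−1 ) / ( (1+q/(λ−1))^n + q−1 )], where λ = e^{−β}; equivalently, the expected number of monochromatic edges per vertex in the Potts model on C_n equals λ( (λ+q−1)^{n−1} + (q−1)(λ−1)^{n−1} ) / ( (λ+q−1)^n + (q−1)(λ−1)^n ). -/
open scoped Classical
open Finset

/-- Number of monochromatic edges of `G` under the coloring `σ`. -/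
noncomputable def monoEdges {V : Type} [Fintype V] (G : SimpleGraph V) {q : ℕ}
    (σ : V → Fin q) : ℕ :=
  (G.edgeFinset.filter fun e =>
    Sym2.lift ⟨fun u v => σ u = σ v, fun _ _ => propext eq_comm⟩ e).card

/-- The `q`-color Potts partition function of `G` at inverse temperature `β`. -/
noncomputable def pottsZ {V : Type} [Fintype V] (G : SimpleGraph V) (q : ℕ) (β : ℝ) : ℝ :=
  ∑ σ : V → Fin q, Real.exp (-β * monoEdges G σ)

/-- The internal energy per particle: expected number of monochromatic
edges per vertex in the Potts model. -/
noncomputable def pottsU {V : Type} [Fintype V] (G : SimpleGraph V) (q : ℕ) (β : ℝ) : ℝ :=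
  (Fintype.card V : ℝ)⁻¹ *
    (∑ σ : V → Fin q, (monoEdges G σ : ℝ) * Real.exp (-β * monoEdges G σ)) / pottsZ G q β

/-- The number of proper `q`-colorings of `G`. -/
noncomputable def properCount {V : Type} [Fintype V] (G : SimpleGraph V) (q : ℕ) : ℕ :=
  (Finset.univ.filter fun σ : V → Fin q => monoEdges G σ = 0).card

/-- transfer weight -/
noncomputable def Tw (x : ℝ) {q : ℕ} (a b : Fin q) : ℝ := if a = b then x else 1

lemma Tw_eq (x : ℝ) {q : ℕ} (a b : Fin q) :
    Tw x a b = (x - 1) * (if a = b then (1:ℝ) else 0) + 1 := by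
  unfold Tw; split <;> ring

/-- product of transfer weights along a path -/
noncomputable def pprod (x : ℝ) {q k : ℕ} (h : Fin (k+1) → Fin q) : ℝ :=
  ∏ i : Fin k, Tw x (h i.castSucc) (h i.succ)

lemma pprod_succ (x : ℝ) {q k : ℕ} (h : Fin (k+2) → Fin q) :
    pprod x h = Tw x (h 0) (Fin.tail h 0) * pprod x (Fin.tail h) := by
  unfold pprod
  rw [Fin.prod_univ_succ]
  simp [Fin.tail, Fin.succ_zero_eq_one]

/-- sum over interior colorings of a path from `a` to `b` with `m` interior vertices -/
noncomputable def chainS (x : ℝ) (q m : ℕ) (a b : Fin q) : ℝ :=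
  ∑ g : Fin m → Fin q, pprod x (Fin.cons a (Fin.snoc g b))

lemma chainS_zero (x : ℝ) (q : ℕ) (a b : Fin q) : chainS x q 0 a b = Tw x a b := by
  unfold chainS pprod
  rw [Fintype.sum_eq_single (fun i => i.elim0)]
  · simp [Fin.prod_univ_succ, Fin.snoc, Fin.last]
  · intro g hg; exact absurd (funext fun i => i.elim0) hg

lemma chainS_succ (x : ℝ) (q m : ℕ) (a b : Fin q) :
    chainS x q (m+1) a b = ∑ c : Fin q, Tw x a c * chainS x q m c b := by
  unfold chainS
  rw [← (Fin.consEquiv (fun _ : Fin (m+1) => Fin q)).sum_comp]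
  rw [Fintype.sum_prod_type]
  apply Finset.sum_congr rfl
  intro c _
  rw [Finset.mul_sum]
  apply Finset.sum_congr rfl
  intro g _
  have : (Fin.consEquiv (fun _ : Fin (m+1) => Fin q)) (c, g) = Fin.cons c g := rfl
  rw [this, ← Fin.cons_snoc_eq_snoc_cons, pprod_succ]
  simp [Fin.tail]

lemma chainS_eq (x : ℝ) (q : ℕ) (hq : 1 ≤ q) (m : ℕ) (a b : Fin q) :
    chainS x q m a b = (x-1)^(m+1) * (if a = b then (1:ℝ) else 0)
      + ((x + q - 1)^(m+1) - (x-1)^(m+1)) / q := by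
  have hq0 : (q : ℝ) ≠ 0 := Nat.cast_ne_zero.mpr (by omega)
  induction m generalizing a b with
  | zero =>
    rw [chainS_zero, Tw_eq]
    field_simp
    ring
  | succ m ih =>
    rw [chainS_succ]
    have : ∀ c : Fin q, Tw x a c * chainS x q m c b
        = ((x-1) * (if a = c then (1:ℝ) else 0) + 1) *
          ((x-1)^(m+1) * (if c = b then (1:ℝ) else 0)
            + ((x + q - 1)^(m+1) - (x-1)^(m+1)) / q) := by
      intro c; rw [Tw_eq, ih]
    rw [Finset.sum_congr rfl (fun c _ => this c)]
    set C := ((x + q - 1)^(m+1) - (x-1)^(m+1)) / q with hC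
    have expand : ∀ c : Fin q,
        ((x-1) * (if a = c then (1:ℝ) else 0) + 1) * ((x-1)^(m+1) * (if c = b then (1:ℝ) else 0) + C)
        = (x-1)^(m+2) * ((if a = c then (1:ℝ) else 0) * (if c = b then (1:ℝ) else 0))
          + (x-1) * C * (if a = c then (1:ℝ) else 0)
          + (x-1)^(m+1) * (if c = b then (1:ℝ) else 0) + C := by
      intro c; ring
    rw [Finset.sum_congr rfl (fun c _ => expand c)]
    have h1 : ∑ c : Fin q, ((if a = c then (1:ℝ) else 0) * (if c = b then (1:ℝ) else 0))
        = (if a = b then (1:ℝ) else 0) := by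
      rw [Finset.sum_eq_single a]
      · simp
      · intro c _ hc; simp [Ne.symm hc]
      · simp
    simp only [Finset.sum_add_distrib, ← Finset.mul_sum, h1, Finset.sum_ite_eq,
      Finset.mem_univ, if_true, Finset.sum_ite_eq', Finset.sum_const, Finset.card_univ,
      Fintype.card_fin, nsmul_eq_mul, mul_one]
    rw [hC]
    field_simp
    ring

lemma cycProd (x : ℝ) {q m : ℕ} (σ : Fin (m+1) → Fin q) :
    ∏ i : Fin (m+1), Tw x (σ i) (σ (i+1)) = pprod x (Fin.snoc σ (σ 0)) := by
  unfold pprod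
  apply Finset.prod_congr rfl
  intro i _
  induction i using Fin.lastCases with
  | last =>
    rw [Fin.succ_last, Fin.snoc_last, Fin.snoc_castSucc, Fin.last_add_one]
  | cast j =>
    rw [Fin.snoc_castSucc, Fin.succ_castSucc, Fin.snoc_castSucc,
      Fin.coeSucc_eq_succ]

lemma cycSum (x : ℝ) (q : ℕ) (hq : 1 ≤ q) (m : ℕ) :
    ∑ σ : Fin (m+1) → Fin q, ∏ i : Fin (m+1), Tw x (σ i) (σ (i+1))
      = (x + q - 1)^(m+1) + (q - 1) * (x-1)^(m+1) := by
  have hq0 : (q : ℝ) ≠ 0 := Nat.cast_ne_zero.mpr (by omega)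
  have step : ∀ σ : Fin (m+1) → Fin q,
      ∏ i : Fin (m+1), Tw x (σ i) (σ (i+1)) = pprod x (Fin.snoc σ (σ 0)) :=
    fun σ => cycProd x σ
  rw [Finset.sum_congr rfl (fun σ _ => step σ)]
  rw [← (Fin.consEquiv (fun _ : Fin (m+1) => Fin q)).sum_comp]
  rw [Fintype.sum_prod_type]
  have inner : ∀ a : Fin q,
      (∑ g : Fin m → Fin q,
        pprod x (Fin.snoc ((Fin.consEquiv (fun _ : Fin (m+1) => Fin q)) (a, g)) 
          (((Fin.consEquiv (fun _ : Fin (m+1) => Fin q)) (a, g)) 0)))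
      = chainS x q m a a := by
    intro a
    unfold chainS
    apply Finset.sum_congr rfl
    intro g _
    have : (Fin.consEquiv (fun _ : Fin (m+1) => Fin q)) (a, g) = Fin.cons a g := rfl
    rw [this]
    rw [show (Fin.cons a g : Fin (m+1) → Fin q) 0 = a from rfl]
    rw [← Fin.cons_snoc_eq_snoc_cons]
  rw [Finset.sum_congr rfl (fun a _ => inner a)]
  rw [Finset.sum_congr rfl (fun a _ => chainS_eq x q hq m a a)]
  simp only [if_pos rfl, if_true, mul_one, Finset.sum_const, Finset.card_univ, Fintype.card_fin,
    nsmul_eq_mul]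
  field_simp
  ring

open Fin.CommRing in
lemma edge_inj (m : ℕ) : Function.Injective (fun i : Fin (m+3) => s(i, i+1)) := by
  intro i j h
  simp only [Sym2.eq_iff] at h
  rcases h with ⟨h1, _⟩ | ⟨h1, h2⟩
  · exact h1
  · exfalso
    have : j = j + 2 := by
      conv_lhs => rw [← h2, h1]
      ring
    have h2 : (2 : Fin (m+3)) = 0 := by
      have := (left_eq_add).mp this
      exact this
    simp [Fin.ext_iff, Fin.val_two, Nat.mod_eq_of_lt (by omega : 2 < m+3)] at h2

open Fin.CommRing in
lemma edgeFinset_cycle (m : ℕ) [Fintype (SimpleGraph.cycleGraph (m+3)).edgeSet] :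
    (SimpleGraph.cycleGraph (m+3)).edgeFinset
      = Finset.univ.image (fun i : Fin (m+3) => s(i, i+1)) := by
  have hone : ((1 : Fin (m+3)) : ℕ) = 1 := rfl
  ext e
  induction e using Sym2.ind with
  | _ u v =>
    rw [SimpleGraph.mem_edgeFinset, Finset.mem_image, SimpleGraph.mem_edgeSet,
      SimpleGraph.cycleGraph_adj']
    constructor
    · rintro (h | h)
      · refine ⟨v, Finset.mem_univ _, ?_⟩
        have h' : u - v = 1 := by rw [Fin.ext_iff, hone]; exact h
        rw [sub_eq_iff_eq_add] at h'
        rw [h', Sym2.eq_swap]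
        congr 1
        ring
      · refine ⟨u, Finset.mem_univ _, ?_⟩
        have h' : v - u = 1 := by rw [Fin.ext_iff, hone]; exact h
        rw [sub_eq_iff_eq_add] at h'
        rw [h']
        congr 1
        ring
    · rintro ⟨i, -, h⟩
      simp only [Sym2.eq_iff] at h
      rcases h with ⟨h1, h2⟩ | ⟨h1, h2⟩
      · right
        rw [← h1, ← h2, add_sub_cancel_left, hone]
      · left
        rw [← h1, ← h2, add_sub_cancel_left, hone]

lemma mono_cycle (m q : ℕ) (σ : Fin (m+3) → Fin q) :
    monoEdges (SimpleGraph.cycleGraph (m+3)) σ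
      = (Finset.univ.filter fun i : Fin (m+3) => σ i = σ (i+1)).card := by
  unfold monoEdges
  rw [edgeFinset_cycle, Finset.filter_image,
    Finset.card_image_of_injective _ (edge_inj m)]
  congr 1
  apply Finset.filter_congr
  intro i _
  simp

lemma F_eq (m q : ℕ) (hq : 1 ≤ q) (x : ℝ) :
    ∑ σ : Fin (m+3) → Fin q, x ^ monoEdges (SimpleGraph.cycleGraph (m+3)) σ
      = (x + q - 1)^(m+3) + ((q:ℝ)-1) * (x-1)^(m+3) := by
  have key : ∀ σ : Fin (m+3) → Fin q,
      x ^ monoEdges (SimpleGraph.cycleGraph (m+3)) σ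
        = ∏ i : Fin (m+3), Tw x (σ i) (σ (i+1)) := by
    intro σ
    rw [mono_cycle]
    unfold Tw
    rw [Finset.prod_ite, Finset.prod_const, Finset.prod_const_one, mul_one]
  rw [Finset.sum_congr rfl (fun σ _ => key σ)]
  have := cycSum x q hq (m+2)
  convert this using 2

lemma G_der (m q : ℕ) (x : ℝ) :
    HasDerivAt (fun y : ℝ => (y + q - 1)^(m+3) + ((q:ℝ)-1) * (y-1)^(m+3))
      (((m:ℝ)+3) * ((x + (q:ℝ) - 1)^(m+2) + ((q:ℝ)-1) * (x-1)^(m+2))) x := by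
  have a1 : HasDerivAt (fun y : ℝ => y + (q:ℝ) - 1) 1 x := by
    simpa using ((hasDerivAt_id x).add_const ((q:ℝ))).sub_const 1
  have a2 := a1.fun_pow (m+3)
  have b1 : HasDerivAt (fun y : ℝ => y - 1) 1 x := (hasDerivAt_id x).sub_const 1
  have b2 := (b1.fun_pow (m+3)).const_mul ((q:ℝ)-1)
  have h := a2.fun_add b2
  refine h.congr_deriv ?_
  push_cast
  ring_nf

lemma num_eq (m q : ℕ) (hq : 1 ≤ q) (x : ℝ) :
    ∑ σ : Fin (m+3) → Fin q, (monoEdges (SimpleGraph.cycleGraph (m+3)) σ : ℝ)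
        * x ^ monoEdges (SimpleGraph.cycleGraph (m+3)) σ
      = x * (((m:ℝ)+3) * ((x + (q:ℝ) - 1)^(m+2) + ((q:ℝ)-1) * (x-1)^(m+2))) := by
  have h1 : HasDerivAt (fun y : ℝ => ∑ σ : Fin (m+3) → Fin q,
        y ^ monoEdges (SimpleGraph.cycleGraph (m+3)) σ)
      (∑ σ : Fin (m+3) → Fin q, (monoEdges (SimpleGraph.cycleGraph (m+3)) σ : ℝ)
        * x ^ (monoEdges (SimpleGraph.cycleGraph (m+3)) σ - 1)) x :=
    HasDerivAt.fun_sum fun σ _ => hasDerivAt_pow _ x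
  have heq : (fun y : ℝ => ∑ σ : Fin (m+3) → Fin q,
        y ^ monoEdges (SimpleGraph.cycleGraph (m+3)) σ)
      = fun y : ℝ => (y + (q:ℝ) - 1)^(m+3) + ((q:ℝ)-1) * (y-1)^(m+3) :=
    funext fun y => F_eq m q hq y
  rw [heq] at h1
  have hEqD := h1.unique (G_der m q x)
  have perterm : ∀ σ : Fin (m+3) → Fin q,
      (monoEdges (SimpleGraph.cycleGraph (m+3)) σ : ℝ)
        * x ^ monoEdges (SimpleGraph.cycleGraph (m+3)) σ
      = x * ((monoEdges (SimpleGraph.cycleGraph (m+3)) σ : ℝ)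
        * x ^ (monoEdges (SimpleGraph.cycleGraph (m+3)) σ - 1)) := by
    intro σ
    rcases Nat.eq_zero_or_pos (monoEdges (SimpleGraph.cycleGraph (m+3)) σ) with h | h
    · simp [h]
    · obtain ⟨k, hk⟩ := Nat.exists_eq_add_of_le h
      rw [show monoEdges (SimpleGraph.cycleGraph (m+3)) σ = k + 1 by omega]
      simp [pow_succ]
      ring
  rw [Finset.sum_congr rfl (fun σ _ => perterm σ), ← Finset.mul_sum, hEqD]

theorem potts_internal_energy_cycle (n : ℕ) (hn : 3 ≤ n) (q : ℕ) (hq : 2 ≤ q) (β : ℝ) :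
    pottsU (SimpleGraph.cycleGraph n) q β =
      Real.exp (-β) *
        ((Real.exp (-β) + (q : ℝ) - 1) ^ (n - 1) +
          ((q : ℝ) - 1) * (Real.exp (-β) - 1) ^ (n - 1)) /
        ((Real.exp (-β) + (q : ℝ) - 1) ^ n + ((q : ℝ) - 1) * (Real.exp (-β) - 1) ^ n) := by
  obtain ⟨m, rfl⟩ : ∃ m, n = m + 3 := ⟨n - 3, by omega⟩
  have hq1 : 1 ≤ q := by omega
  set lam := Real.exp (-β) with hlam
  have hexp : ∀ k : ℕ, Real.exp (-β * k) = lam ^ k := by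
    intro k
    rw [mul_comm, Real.exp_nat_mul]
  unfold pottsU pottsZ
  have hZ : ∑ σ : Fin (m+3) → Fin q,
      Real.exp (-β * monoEdges (SimpleGraph.cycleGraph (m+3)) σ)
      = (lam + q - 1)^(m+3) + ((q:ℝ)-1) * (lam-1)^(m+3) := by
    rw [Finset.sum_congr rfl (fun σ _ => hexp _)]
    exact F_eq m q hq1 lam
  have hS : ∑ σ : Fin (m+3) → Fin q,
      (monoEdges (SimpleGraph.cycleGraph (m+3)) σ : ℝ)
        * Real.exp (-β * monoEdges (SimpleGraph.cycleGraph (m+3)) σ)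
      = lam * (((m:ℝ)+3) * ((lam + (q:ℝ) - 1)^(m+2) + ((q:ℝ)-1) * (lam-1)^(m+2))) := by
    rw [Finset.sum_congr rfl (fun σ _ => by rw [hexp])]
    exact num_eq m q hq1 lam
  have hm3 : ((Fintype.card (Fin (m+3)) : ℝ)) = (m:ℝ) + 3 := by
    simp [Fintype.card_fin]
  have hne : (m:ℝ) + 3 ≠ 0 := by positivity
  have huniv : ∀ (i1 i2 : Fintype (Fin (m+3) → Fin q)),
      (@Finset.univ _ i1) = (@Finset.univ _ i2) := by
    intro i1 i2
    exact congrArg (fun i => @Finset.univ _ i) (Subsingleton.elim i1 i2)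
  trans (((m:ℝ)+3)⁻¹ * (lam * (((m:ℝ)+3) *
      ((lam + (q:ℝ) - 1)^(m+2) + ((q:ℝ)-1)*(lam-1)^(m+2)))) /
      ((lam + (q:ℝ) - 1)^(m+3) + ((q:ℝ)-1)*(lam-1)^(m+3)))
  · congr 1
    · congr 1
      · rw [hm3]
      · convert hS using 2
        apply huniv
    · convert hZ using 2
      apply huniv
  · rw [show m + 3 - 1 = m + 2 from rfl]
    congr 1
    have : ((m:ℝ)+3)⁻¹ * (lam * (((m:ℝ)+3) *
        ((lam + (q:ℝ) - 1)^(m+2) + ((q:ℝ)-1)*(lam-1)^(m+2))))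
      = (((m:ℝ)+3)⁻¹ * ((m:ℝ)+3)) * (lam *
        ((lam + (q:ℝ) - 1)^(m+2) + ((q:ℝ)-1)*(lam-1)^(m+2))) := by ring
    rw [this, inv_mul_cancel₀ hne, one_mul]
end

section
/- For β > 0, q ≥ 2, and odd n ≥ 3, the internal energy per particle of the Potts model on cycles satisfies U_{C_n}^q(β) > U_{C_{n+2}}^q(β). -/
open scoped Classical
open Finset

/-!
With `w = e^{-β}`, the Boltzmann weight of a colouring of `C_n` is the product, around the cycle,
of entries of the transfer matrix `T = (w - 1) • 1 + J` (`J` the all-ones matrix), so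
`Z_n = tr T^n = (w + q - 1)^n + (q - 1)(w - 1)^n`. The energy numerator is `-dZ_n/dβ`, whence
`U_n = w Z_{n-1} / Z_n`, and `U_{n+2} < U_n` reduces to the identity
`Z_k Z_{k+3} - Z_{k+2} Z_{k+1} = (q - 1) q² (2w + q - 2) ((w + q - 1)(w - 1))^k`,
whose right-hand side is positive for the even exponent `k = n - 1`.
-/

section

variable {V : Type} [Fintype V] (G : SimpleGraph V) (q : ℕ)

lemma pottsZ_pos [NeZero q] (β : ℝ) : 0 < pottsZ G q β :=
  Finset.sum_pos (fun _ _ => Real.exp_pos _) Finset.univ_nonempty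

lemma hasDerivAt_pottsZ (β : ℝ) :
    HasDerivAt (pottsZ G q)
      (-∑ σ : V → Fin q, (monoEdges G σ : ℝ) * Real.exp (-β * monoEdges G σ)) β := by
  rw [← Finset.sum_neg_distrib]
  refine HasDerivAt.fun_sum fun σ _ => ?_
  exact ((hasDerivAt_neg β).mul_const (monoEdges G σ : ℝ)).exp.congr_deriv (by ring)

lemma pottsU_eq_of_hasDerivAt {β Z' : ℝ} (h : HasDerivAt (pottsZ G q) Z' β) :
    pottsU G q β = -Z' / (Fintype.card V * pottsZ G q β) := by
  rw [← (hasDerivAt_pottsZ G q β).unique h, neg_neg, pottsU]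
  ring

end

namespace Matrix

variable {ι R : Type*} [Fintype ι]

lemma of_one_mul_of_one [NonAssocSemiring R] :
    (of 1 : Matrix ι ι R) * of 1 = Fintype.card ι • of 1 := by
  ext a b; simp [Matrix.mul_apply]

variable [DecidableEq ι]

section CommSemiring

variable [CommSemiring R]

lemma sum_prod_path_mul_eq_trace_pow_mul (M N : Matrix ι ι R) (k : ℕ) :
    ∑ σ : Fin (k + 1) → ι,
      (∏ i : Fin k, M (σ i.castSucc) (σ i.succ)) * N (σ (Fin.last k)) (σ 0)
      = trace (M ^ k * N) := by
  induction k generalizing N with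
  | zero =>
    simp only [Finset.univ_eq_empty, Finset.prod_empty, one_mul, pow_zero]
    exact Fintype.sum_equiv (Equiv.funUnique (Fin 1) ι) _ _ fun σ => rfl
  | succ k ih =>
    rw [← Fintype.sum_equiv (Fin.snocEquiv fun _ => ι) _ _ fun _ => rfl, Fintype.sum_prod_type,
      Finset.sum_comm, pow_succ, Matrix.mul_assoc, ← ih]
    refine Finset.sum_congr rfl fun τ _ => ?_
    have h0 (b : ι) : Fin.snoc (α := fun _ => ι) τ b 0 = τ 0 := Fin.snoc_castSucc (i := 0) ..
    simp only [Fin.snocEquiv_apply, Fin.prod_univ_castSucc, Fin.succ_castSucc, Fin.snoc_castSucc,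
      Fin.succ_last, Fin.snoc_last, h0, Matrix.mul_apply, Finset.mul_sum]
    exact Finset.sum_congr rfl fun b _ => by ring

lemma trace_pow_succ_eq_sum_prod_cycle (M : Matrix ι ι R) (k : ℕ) :
    trace (M ^ (k + 1)) = ∑ σ : Fin (k + 1) → ι, ∏ j, M (σ j) (σ (j + 1)) := by
  rw [pow_succ, ← sum_prod_path_mul_eq_trace_pow_mul]
  refine Finset.sum_congr rfl fun σ _ => ?_
  rw [Fin.prod_univ_castSucc]
  simp only [Fin.coeSucc_eq_succ, Fin.last_add_one]

end CommSemiring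

section CommRing

variable [CommRing R]

lemma exists_smul_one_add_of_one_pow (c : R) (n : ℕ) :
    ∃ d : R, (c • 1 + of 1 : Matrix ι ι R) ^ n = c ^ n • 1 + d • of 1 ∧
      c ^ n + Fintype.card ι * d = (c + Fintype.card ι) ^ n := by
  induction n with
  | zero => exact ⟨0, by simp⟩
  | succ n ih =>
    obtain ⟨d, hpow, hd⟩ := ih
    refine ⟨c ^ n + d * (c + Fintype.card ι), ?_, by linear_combination (c + Fintype.card ι) * hd⟩
    rw [pow_succ, hpow]
    simp only [Matrix.add_mul, Matrix.mul_add, Matrix.smul_mul, Matrix.mul_smul, Matrix.one_mul,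
      Matrix.mul_one, of_one_mul_of_one]
    module

lemma trace_smul_one_add_of_one_pow (c : R) (n : ℕ) :
    trace ((c • 1 + of 1 : Matrix ι ι R) ^ n)
      = (c + Fintype.card ι) ^ n + (Fintype.card ι - 1) * c ^ n := by
  obtain ⟨d, hpow, hd⟩ := exists_smul_one_add_of_one_pow (ι := ι) c n
  have htrace : trace (of 1 : Matrix ι ι R) = Fintype.card ι := by simp [trace]
  rw [hpow, trace_add, trace_smul, trace_smul, trace_one, htrace, smul_eq_mul, smul_eq_mul]
  linear_combination hd

end CommRing

end Matrix

open SimpleGraph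

lemma cycleGraph_edgeFinset (m : ℕ) [Fintype (cycleGraph (m + 3)).edgeSet] :
    (cycleGraph (m + 3)).edgeFinset = Finset.univ.image fun i : Fin (m + 3) => s(i, i + 1) := by
  ext e
  induction e with
  | _ u v =>
    simp only [mem_edgeFinset, mem_edgeSet, Finset.mem_image, Finset.mem_univ, true_and,
      cycleGraph_adj (n := m + 1), Sym2.eq_iff]
    constructor
    · rintro (h | h)
      · exact ⟨v, Or.inr ⟨rfl, by rw [← h, add_sub_cancel]⟩⟩
      · exact ⟨u, Or.inl ⟨rfl, by rw [← h, add_sub_cancel]⟩⟩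
    · rintro ⟨i, ⟨rfl, rfl⟩ | ⟨rfl, rfl⟩⟩ <;> simp

lemma cycleGraph_edge_injective (m : ℕ) :
    Function.Injective fun i : Fin (m + 3) => s(i, i + 1) := by
  intro i j h
  rcases Sym2.eq_iff.mp h with ⟨hij, _⟩ | ⟨hij, hji⟩
  · exact hij
  · have h2 : (2 : Fin (m + 3)) = 0 := by
      have : i + 2 = i := calc
        i + 2 = i + 1 + 1 := by rw [add_assoc]; rfl
        _ = i := by rw [hji, hij]
      simpa using this
    exact absurd (congrArg Fin.val h2) (by simp [Nat.mod_eq_of_lt])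

lemma monoEdges_cycleGraph {m q : ℕ} (σ : Fin (m + 3) → Fin q) :
    monoEdges (cycleGraph (m + 3)) σ = #{i | σ i = σ (i + 1)} := by
  rw [monoEdges, cycleGraph_edgeFinset, Finset.filter_image,
    Finset.card_image_of_injective _ (cycleGraph_edge_injective m)]
  exact congrArg _ (Finset.filter_congr fun i _ => by simp)

noncomputable def cyclePottsZ (q n : ℕ) (β : ℝ) : ℝ :=
  (Real.exp (-β) + q - 1) ^ n + (q - 1) * (Real.exp (-β) - 1) ^ n

lemma pottsZ_cycleGraph (m q : ℕ) : pottsZ (cycleGraph (m + 3)) q = cyclePottsZ q (m + 3) := by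
  funext β
  set T : Matrix (Fin q) (Fin q) ℝ := (Real.exp (-β) - 1) • 1 + .of 1
  have hT (a b : Fin q) : T a b = if a = b then Real.exp (-β) else 1 := by
    by_cases h : a = b <;> simp [T, h]
  have hexp (σ : Fin (m + 3) → Fin q) :
      Real.exp (-β * monoEdges (cycleGraph (m + 3)) σ) = ∏ j, T (σ j) (σ (j + 1)) := by
    simp only [hT, Finset.prod_ite, Finset.prod_const_one, mul_one, Finset.prod_const,
      monoEdges_cycleGraph, mul_comm (-β), Real.exp_nat_mul]
  calc pottsZ (cycleGraph (m + 3)) q β = ∑ σ : Fin (m + 3) → Fin q, ∏ j, T (σ j) (σ (j + 1)) := by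
        -- `pottsZ` sums over the `Fintype` instance built from classical decidable equality
        rw [pottsZ]; convert Finset.sum_congr rfl fun σ _ => hexp σ
    _ = Matrix.trace (T ^ (m + 3)) := (Matrix.trace_pow_succ_eq_sum_prod_cycle T (m + 2)).symm
    _ = cyclePottsZ q (m + 3) β := by
        rw [Matrix.trace_smul_one_add_of_one_pow, Fintype.card_fin, cyclePottsZ]; ring

lemma hasDerivAt_cyclePottsZ (q n : ℕ) (β : ℝ) :
    HasDerivAt (cyclePottsZ q n) (-(n * Real.exp (-β) * cyclePottsZ q (n - 1) β)) β := by
  have hw : HasDerivAt (fun β => Real.exp (-β)) (-Real.exp (-β)) β := by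
    simpa using (hasDerivAt_neg β).exp
  refine ((((hw.add_const (q : ℝ)).sub_const 1).pow n).add
    (((hw.sub_const 1).pow n).const_mul ((q : ℝ) - 1))).congr_deriv ?_
  simp only [cyclePottsZ]
  ring

lemma pottsU_cycleGraph (m q : ℕ) (β : ℝ) :
    pottsU (cycleGraph (m + 3)) q β
      = Real.exp (-β) * cyclePottsZ q (m + 2) β / cyclePottsZ q (m + 3) β := by
  have hZ' : HasDerivAt (pottsZ (cycleGraph (m + 3)) q)
      (-((m + 3 : ℕ) * Real.exp (-β) * cyclePottsZ q (m + 2) β)) β :=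
    pottsZ_cycleGraph m q ▸ hasDerivAt_cyclePottsZ q (m + 3) β
  rw [pottsU_eq_of_hasDerivAt _ _ hZ', pottsZ_cycleGraph, Fintype.card_fin]
  field_simp

lemma cyclePottsZ_mul_sub_mul (q k : ℕ) (β : ℝ) :
    cyclePottsZ q k β * cyclePottsZ q (k + 3) β - cyclePottsZ q (k + 2) β * cyclePottsZ q (k + 1) β
      = (q - 1) * q ^ 2 * (2 * Real.exp (-β) + q - 2)
          * ((Real.exp (-β) + q - 1) * (Real.exp (-β) - 1)) ^ k := by
  simp only [cyclePottsZ, mul_pow]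
  ring

lemma cyclePottsZ_mul_sub_mul_pos {q k : ℕ} (hq : 2 ≤ q) (hk : Even k) {β : ℝ} (hβ : β ≠ 0) :
    0 < cyclePottsZ q k β * cyclePottsZ q (k + 3) β
      - cyclePottsZ q (k + 2) β * cyclePottsZ q (k + 1) β := by
  rw [cyclePottsZ_mul_sub_mul]
  have hq' : (2 : ℝ) ≤ q := by exact_mod_cast hq
  have hw := Real.exp_pos (-β)
  have hq1 : (0 : ℝ) < q - 1 := by linarith
  have hA : 0 < Real.exp (-β) + q - 1 := by linarith
  have hAB : 0 < 2 * Real.exp (-β) + q - 2 := by linarith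
  have hB : Real.exp (-β) - 1 ≠ 0 := sub_ne_zero.mpr (by simpa using hβ)
  have := hk.pow_pos (mul_ne_zero hA.ne' hB)
  positivity

theorem potts_energy_cycle_odd_decreasing (n : ℕ) (hn : 3 ≤ n) (hodd : Odd n)
    (q : ℕ) (hq : 2 ≤ q) (β : ℝ) (hβ : 0 < β) :
    pottsU (SimpleGraph.cycleGraph (n + 2)) q β < pottsU (SimpleGraph.cycleGraph n) q β := by
  obtain ⟨m, rfl⟩ : ∃ m, n = m + 3 := ⟨n - 3, by omega⟩
  have hk : Even (m + 2) := Nat.not_odd_iff_even.mp (Nat.odd_add_one.mp hodd)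
  have : NeZero q := ⟨by omega⟩
  have hZ (k : ℕ) : 0 < cyclePottsZ q (k + 3) β := pottsZ_cycleGraph k q ▸ pottsZ_pos _ q β
  rw [show m + 3 + 2 = m + 2 + 3 by ring, pottsU_cycleGraph, pottsU_cycleGraph,
    mul_div_assoc, mul_div_assoc, mul_lt_mul_iff_right₀ (Real.exp_pos _),
    div_lt_div_iff₀ (hZ _) (hZ _)]
  linarith [cyclePottsZ_mul_sub_mul_pos hq hk hβ.ne']
end

section
/- For every cubic (3-regular) finite graph G and every integer q ≥ 2, the number of proper q-colorings satisfies C_q(G)^{1/|V(G)|} ≥ C_q(K_4)^{1/4}, i.e., C_q(G)^4 ≥ C_q(K_4)^{|V(G)|}, where C_q(K_4) = q(q−1)(q−2)(q−3). -/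
open scoped Classical
open Finset

/-!
Colour the vertices greedily in the order given by a bijection `π : V ≃ Fin n`: when `v` is
reached, at most `b π v` colours are blocked, where `b π v` counts the neighbours of `v` that
precede it, so `G` has at least `∏ v, (q - b π v)` proper `q`-colourings. Now take the product
over all `n!` orderings. The number `b π v` is the rank of `v` within its closed neighbourhood
`N[v]`, and precomposing `π` with the transposition of `v` and `w ∈ N[v]` turns it into the rank
of `w`. Hence, if `v` has degree `d`, the `(d + 1)`-st power of `∏ π, (q - b π v)` equals
`∏ π, ∏ w ∈ N[v], (q - rank w) = q.descFactorial (d + 1) ^ n!`, and therefore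
`C_q(G) ^ (d + 1) ≥ q.descFactorial (d + 1) ^ n`. For `d = 3` this falling factorial is
`C_q(K₄)`.
-/

open SimpleGraph

variable {V α : Type} [LinearOrder α]

noncomputable def rankIn (π : V → α) (T : Finset V) (w : V) : ℕ :=
  #{u ∈ T | π u < π w}

theorem rankIn_lt_rankIn {π : V → α} {T : Finset V} {u w : V} (hu : u ∈ T) (h : π u < π w) :
    rankIn π T u < rankIn π T w := by
  refine card_lt_card ⟨fun x hx => ?_, fun hsub => ?_⟩
  · simp only [mem_filter] at hx ⊢
    exact ⟨hx.1, hx.2.trans h⟩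
  · simpa using hsub (mem_filter.mpr ⟨hu, h⟩)

theorem rankIn_lt_card {π : V → α} {T : Finset V} {w : V} (hw : w ∈ T) :
    rankIn π T w < #T :=
  card_lt_card (filter_ssubset.mpr ⟨w, hw, lt_irrefl _⟩)

theorem rankIn_injOn {π : V → α} {T : Finset V} (hπ : Set.InjOn π T) :
    Set.InjOn (rankIn π T) T := by
  intro u hu w hw h
  by_contra hne
  rcases lt_or_gt_of_ne (hπ.ne hu hw hne) with hlt | hlt
  · exact (rankIn_lt_rankIn hu hlt).ne h
  · exact (rankIn_lt_rankIn hw hlt).ne' h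

theorem image_rankIn {π : V → α} {T : Finset V} (hπ : Set.InjOn π T) :
    T.image (rankIn π T) = range #T := by
  refine eq_of_subset_of_card_le (fun i hi => ?_) ?_
  · obtain ⟨w, hw, rfl⟩ := mem_image.mp hi
    exact mem_range.mpr (rankIn_lt_card hw)
  · rw [card_range, card_image_of_injOn (rankIn_injOn hπ)]

theorem prod_rankIn {M : Type} [CommMonoid M] (f : ℕ → M) {π : V → α} {T : Finset V}
    (hπ : Set.InjOn π T) : ∏ w ∈ T, f (rankIn π T w) = ∏ i ∈ range #T, f i := by
  rw [← image_rankIn hπ, prod_image (rankIn_injOn hπ)]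

theorem rankIn_comp_swap (π : V → α) {T : Finset V} {v w : V} (hv : v ∈ T) (hw : w ∈ T) :
    rankIn (π ∘ Equiv.swap v w) T v = rankIn π T w := by
  have hT : ∀ x ∈ T, Equiv.swap v w x ∈ T := by
    intro x hx
    rw [Equiv.swap_apply_def]
    split_ifs <;> assumption
  refine card_nbij' (Equiv.swap v w) (Equiv.swap v w) ?_ ?_ ?_ ?_ <;> intro x hx <;>
    simp only [coe_filter, Set.mem_ofPred_eq, Function.comp_apply, Equiv.swap_apply_left,
      Equiv.swap_apply_self] at hx ⊢
  · exact ⟨hT x hx.1, hx.2⟩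
  · exact ⟨hT x hx.1, by simpa using hx.2⟩

variable [Fintype V]

theorem monoEdges_eq_zero_iff (G : SimpleGraph V) {q : ℕ} (σ : V → Fin q) :
    monoEdges G σ = 0 ↔ ∀ u w, G.Adj u w → σ u ≠ σ w := by
  rw [monoEdges, card_eq_zero, filter_eq_empty_iff]
  refine ⟨fun h u w huw => h (x := s(u, w)) (G.mem_edgeFinset.mpr huw), fun h e he => ?_⟩
  induction e using Sym2.ind with
  | _ u w => exact h u w (G.mem_edgeFinset.mp he)

theorem properCount_top (W : Type) [Fintype W] (q : ℕ) :
    properCount (⊤ : SimpleGraph W) q = q.descFactorial (Fintype.card W) := by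
  have hinj : ∀ σ : W → Fin q, monoEdges (⊤ : SimpleGraph W) σ = 0 ↔ σ.Injective := by
    intro σ
    simp only [monoEdges_eq_zero_iff, top_adj, Function.Injective]
    exact ⟨fun h u w hc => by_contra fun hne => h u w hne hc, fun h u w huw hc => huw (h hc)⟩
  rw [properCount, filter_congr fun σ _ => hinj σ, ← Fintype.card_subtype,
    Fintype.card_congr (Equiv.subtypeInjectiveEquivEmbedding W (Fin q)),
    Fintype.card_embedding_eq, Fintype.card_fin]

noncomputable def backDegree (G : SimpleGraph V) (π : V → α) (v : V) : ℕ :=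
  #{u ∈ G.neighborFinset v | π u < π v}

theorem backDegree_eq_rankIn (G : SimpleGraph V) (π : V → α) (v : V) :
    backDegree G π v = rankIn π (insert v (G.neighborFinset v)) v := by
  rw [backDegree, rankIn, filter_insert, if_neg (lt_irrefl _)]

theorem prod_backDegree_pow {M : Type} [CommMonoid M] (f : ℕ → M) (G : SimpleGraph V)
    {d : ℕ} (v : V) (hv : G.degree v = d) :
    (∏ π : V ≃ Fin (Fintype.card V), f (backDegree G π v)) ^ (d + 1)
      = (∏ i ∈ range (d + 1), f i) ^ Fintype.card (V ≃ Fin (Fintype.card V)) := by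
  set T := insert v (G.neighborFinset v)
  have hT : #T = d + 1 := by
    rw [card_insert_of_notMem (G.notMem_neighborFinset_self v), card_neighborFinset_eq_degree,
      hv]
  have hswap : ∀ w ∈ T, ∏ π : V ≃ Fin (Fintype.card V), f (rankIn π T v)
      = ∏ π : V ≃ Fin (Fintype.card V), f (rankIn π T w) := by
    intro w hw
    have hinv : Function.Involutive
        fun π : V ≃ Fin (Fintype.card V) => (Equiv.swap v w).trans π := fun π => by ext; simp
    rw [← hinv.bijective.prod_comp]
    exact Fintype.prod_congr _ _ fun π => by
      rw [Equiv.coe_trans, rankIn_comp_swap π (mem_insert_self v _) hw]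
  calc (∏ π : V ≃ Fin (Fintype.card V), f (backDegree G π v)) ^ (d + 1)
      = ∏ w ∈ T, ∏ π : V ≃ Fin (Fintype.card V), f (rankIn π T w) := by
        simp_rw [backDegree_eq_rankIn, ← hT, ← prod_const]
        exact prod_congr rfl hswap
    _ = ∏ π : V ≃ Fin (Fintype.card V), ∏ i ∈ range (d + 1), f i := by
        rw [prod_comm]
        exact Fintype.prod_congr _ _ fun π => by rw [prod_rankIn f π.injective.injOn, hT]
    _ = _ := by rw [prod_const, card_univ]

section Greedy

variable (G : SimpleGraph V) {q : ℕ} (c₀ : Fin q)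

/-- Fixing the colour `c₀` off `S` makes this a copy of the proper colourings of `G[S]`. -/
noncomputable def properColoringsOn (S : Finset V) : Finset (V → Fin q) :=
  {σ | (∀ u ∈ S, ∀ w ∈ S, G.Adj u w → σ u ≠ σ w) ∧ ∀ x ∉ S, σ x = c₀}

theorem card_properColoringsOn_empty : #(properColoringsOn G c₀ ∅) = 1 := by
  rw [card_eq_one]
  refine ⟨fun _ => c₀, eq_singleton_iff_unique_mem.mpr ⟨?_, fun σ hσ => ?_⟩⟩
  · simp [properColoringsOn]
  · simp only [properColoringsOn, mem_filter] at hσ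
    exact funext fun x => hσ.2.2 x (notMem_empty x)

theorem card_properColoringsOn_univ : #(properColoringsOn G c₀ univ) = properCount G q := by
  simp [properColoringsOn, properCount, monoEdges_eq_zero_iff]

variable {G c₀}

theorem update_mem_properColoringsOn_insert {S : Finset V} {v : V} (hv : v ∉ S)
    {σ : V → Fin q} (hσ : σ ∈ properColoringsOn G c₀ S) {c : Fin q}
    (hc : ∀ u ∈ G.neighborFinset v ∩ S, σ u ≠ c) :
    Function.update σ v c ∈ properColoringsOn G c₀ (insert v S) := by
  simp only [properColoringsOn, mem_filter, mem_univ, true_and, mem_insert] at hσ ⊢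
  refine ⟨fun u hu w hw huw => ?_, fun x hx => ?_⟩
  · rcases hu with rfl | hu <;> rcases hw with rfl | hw
    · exact absurd huw G.irrefl
    · rw [Function.update_self, Function.update_of_ne huw.ne']
      exact (hc w (mem_inter.mpr ⟨(G.mem_neighborFinset _ _).mpr huw, hw⟩)).symm
    · rw [Function.update_self, Function.update_of_ne huw.ne]
      exact hc u (mem_inter.mpr ⟨(G.mem_neighborFinset _ _).mpr huw.symm, hu⟩)
    · rw [Function.update_of_ne (ne_of_mem_of_not_mem hu hv),
        Function.update_of_ne (ne_of_mem_of_not_mem hw hv)]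
      exact hσ.1 u hu w hw huw
  · push Not at hx
    rw [Function.update_of_ne hx.1]
    exact hσ.2 x hx.2

theorem sub_mul_card_properColoringsOn_le {S : Finset V} {v : V} (hv : v ∉ S) :
    (q - #(G.neighborFinset v ∩ S)) * #(properColoringsOn G c₀ S)
      ≤ #(properColoringsOn G c₀ (insert v S)) := by
  let agreeOff (σ τ : V → Fin q) : Prop := ∀ x ≠ v, σ x = τ x
  have hmany : ∀ σ ∈ properColoringsOn G c₀ S, q - #(G.neighborFinset v ∩ S)
      ≤ #((properColoringsOn G c₀ (insert v S)).bipartiteAbove agreeOff σ) := by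
    intro σ hσ
    set free := univ \ (G.neighborFinset v ∩ S).image σ
    calc q - #(G.neighborFinset v ∩ S) ≤ #free := by
          rw [card_sdiff_of_subset (subset_univ _), card_univ, Fintype.card_fin]
          exact Nat.sub_le_sub_left card_image_le q
      _ = #(free.image (Function.update σ v)) :=
          (card_image_of_injective _ (Function.update_injective σ v)).symm
      _ ≤ _ := by
          refine card_le_card (image_subset_iff.mpr fun c hc => mem_filter.mpr ⟨?_, ?_⟩)
          · refine update_mem_properColoringsOn_insert hv hσ fun u hu h => ?_
            exact (mem_sdiff.mp hc).2 (mem_image.mpr ⟨u, hu, h⟩)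
          · exact fun x hx => (Function.update_of_ne hx _ _).symm
  have hfew : ∀ τ ∈ properColoringsOn G c₀ (insert v S),
      #((properColoringsOn G c₀ S).bipartiteBelow agreeOff τ) ≤ 1 := by
    intro τ _
    refine card_le_one.mpr fun σ₁ hσ₁ σ₂ hσ₂ => funext fun x => ?_
    simp only [bipartiteBelow, properColoringsOn, mem_filter, mem_univ, true_and] at hσ₁ hσ₂
    by_cases hx : x = v
    · subst hx
      rw [hσ₁.1.2 x hv, hσ₂.1.2 x hv]
    · rw [hσ₁.2 x hx, hσ₂.2 x hx]
  simpa [mul_comm] using card_mul_le_card_mul agreeOff hmany hfew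

end Greedy

theorem prod_sub_backDegree_le_properCount (G : SimpleGraph V) {q : ℕ} (hq : 0 < q)
    (π : V ≃ Fin (Fintype.card V)) : ∏ v, (q - backDegree G π v) ≤ properCount G q := by
  let c₀ : Fin q := ⟨0, hq⟩
  let initial (k : ℕ) : Finset V := {x | (π x : ℕ) < k}
  have hstep : ∀ k (hk : k < Fintype.card V), let v := π.symm ⟨k, hk⟩
      initial (k + 1) = insert v (initial k) ∧ v ∉ initial k ∧
        #(G.neighborFinset v ∩ initial k) = backDegree G π v := by
    intro k hk v
    have hπv : (π v : ℕ) = k := by simp [v]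
    refine ⟨?_, by simp [initial, hπv], ?_⟩
    · ext x
      simp only [initial, mem_filter, mem_univ, true_and, mem_insert, v,
        Equiv.eq_symm_apply, Fin.ext_iff]
      omega
    · rw [backDegree]
      congr 1
      ext u
      simp [initial, Fin.lt_def, hπv]
  have hgreedy : ∀ k ≤ Fintype.card V,
      ∏ v ∈ initial k, (q - backDegree G π v) ≤ #(properColoringsOn G c₀ (initial k)) := by
    intro k
    induction k with
    | zero => simp [initial, card_properColoringsOn_empty]
    | succ k ih =>
      intro hk
      obtain ⟨hinsert, hnew, hback⟩ := hstep k hk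
      rw [hinsert, prod_insert hnew]
      exact (Nat.mul_le_mul_left _ (ih (by omega))).trans
        (hback ▸ sub_mul_card_properColoringsOn_le hnew)
  have hall : initial (Fintype.card V) = univ := by simp [initial]
  simpa [hall, card_properColoringsOn_univ] using hgreedy _ le_rfl

theorem descFactorial_pow_card_le_properCount_pow {G : SimpleGraph V} {d : ℕ}
    (hG : G.IsRegularOfDegree d) {q : ℕ} (hq : 0 < q) :
    q.descFactorial (d + 1) ^ Fintype.card V ≤ properCount G q ^ (d + 1) := by
  set N := Fintype.card (V ≃ Fin (Fintype.card V))
  have hN : N ≠ 0 := (Fintype.card_pos_iff.mpr ⟨Fintype.equivFin V⟩).ne'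
  set X := ∏ π : V ≃ Fin (Fintype.card V), ∏ v, (q - backDegree G π v) with hXdef
  have hX : X ≤ properCount G q ^ N :=
    (prod_le_pow_card _ _ _ fun π _ => prod_sub_backDegree_le_properCount G hq π).trans_eq
      (by rw [card_univ])
  have hXpow : X ^ (d + 1) = (q.descFactorial (d + 1) ^ Fintype.card V) ^ N := by
    rw [hXdef, prod_comm, ← prod_pow]
    simp_rw [prod_backDegree_pow (fun i => q - i) G _ (hG _), ← Nat.descFactorial_eq_prod_range]
    rw [prod_const, card_univ, ← pow_mul, ← pow_mul, mul_comm]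
  refine (Nat.pow_le_pow_iff_left hN).mp ?_
  calc _ = X ^ (d + 1) := hXpow.symm
    _ ≤ (properCount G q ^ N) ^ (d + 1) := Nat.pow_le_pow_left hX _
    _ = _ := by rw [← pow_mul, ← pow_mul, mul_comm]

theorem colorings_cubic_ge_K4 {V : Type} [Fintype V] (G : SimpleGraph V)
    (hG : G.IsRegularOfDegree 3) (q : ℕ) (hq : 2 ≤ q) :
    properCount (⊤ : SimpleGraph (Fin 4)) q ^ (Fintype.card V) ≤ properCount G q ^ 4 := by
  rw [properCount_top, Fintype.card_fin]
  exact descFactorial_pow_card_le_properCount_pow hG (by omega)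
end

section
/- For the Potts partition functions one has the internal energy of K_{3,3}: U_{K_{3,3}}^q(β) = (3q/(2·Z_{K_{3,3}}))·[λ³(λ³+q−1)² + λ(q−1)(q−2)(3λ+q−3)² + (q−1)(2λ²+λ)(λ²+λ+q−2)²], where λ = e^{−β} and Z_{K_{3,3}} = q(λ³+q−1)³ + 3q(q−1)(λ²+λ+q−2)³ + q(q−1)(q−2)(3λ+q−3)³. -/
open scoped Classical
open Finset

/-!
Split a colouring of `K_{A,B}` into its restrictions `x` to `A` and `y` to `B`. The edge `(a, b)`
is monochromatic iff `x a = y b`, so `m = ∑_b c_x (y b)` with `c_x d` the number of `a` coloured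
`d`; hence `λ^m` is a product over `b` and the sum over `y` factorises: the energy sum
`∑ m λ^m` is `|B| ∑_x T_x S_x^{|B|-1}` with `S_x = ∑_d λ^{c_x d}`, `T_x = ∑_d c_x d λ^{c_x d}`.
For `|A| = 3` the multiplicities `c_x` are `(3)`, `(2,1)` or `(1,1,1)` according as `x` takes one,
two or three values, for `q`, `3q(q-1)` and `q(q-1)(q-2)` colourings `x`.
-/

theorem Fintype.sum_eq_sum_add_of_eq_off {α R : Type*} [Fintype α] [Ring R] (s : Finset α)
    (f : α → R) (K : R) (h : ∀ a ∉ s, f a = K) :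
    ∑ a, f a = ∑ a ∈ s, f a + (Fintype.card α - #s) * K := by
  rw [← sum_add_sum_compl s f, Finset.sum_congr rfl fun a ha => h a (mem_compl.1 ha)]
  rw [sum_const, card_compl, nsmul_eq_mul, Nat.cast_sub (card_le_univ s)]

theorem Fintype.sum_fin_succ_pi {α R : Type*} [Fintype α] [AddCommMonoid R] {n : ℕ}
    (f : (Fin (n + 1) → α) → R) : ∑ x, f x = ∑ a, ∑ v : Fin n → α, f (Fin.cons a v) := by
  rw [← (Fin.consEquiv fun _ => α).sum_comp, Fintype.sum_prod_type]
  rfl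

theorem Fintype.sum_pi_sum_mul_prod {B α R : Type*} [Fintype B] [Fintype α] [CommSemiring R]
    (w v : α → R) :
    ∑ y : B → α, (∑ b, w (y b)) * ∏ b, v (y b) =
      Fintype.card B * ((∑ d, w d * v d) * (∑ d, v d) ^ (Fintype.card B - 1)) := by
  have hb : ∀ b : B, ∑ y : B → α, w (y b) * ∏ b', v (y b') =
      (∑ d, w d * v d) * (∑ d, v d) ^ (Fintype.card B - 1) := by
    intro b
    calc ∑ y : B → α, w (y b) * ∏ b', v (y b')
        = ∑ y : B → α, ∏ b', (if b' = b then w (y b') else 1) * v (y b') := by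
          refine Finset.sum_congr rfl fun y _ => ?_
          rw [prod_mul_distrib, Fintype.prod_ite_eq']
      _ = ∏ b', ∑ d, (if b' = b then w d else 1) * v d :=
          (Fintype.prod_sum fun b' d => (if b' = b then w d else 1) * v d).symm
      _ = ∏ b', if b' = b then ∑ d, w d * v d else ∑ d, v d := by
          refine Finset.prod_congr rfl fun b' _ => ?_
          split_ifs <;> simp
      _ = _ := by
          rw [Fintype.prod_eq_mul_prod_compl b, if_pos rfl]
          simp [prod_ite_of_false, card_compl]
  calc ∑ y : B → α, (∑ b, w (y b)) * ∏ b, v (y b)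
      = ∑ b, ∑ y : B → α, w (y b) * ∏ b', v (y b') := by
        simp_rw [sum_mul]
        exact sum_comm
    _ = _ := by simp [hb]

theorem Fintype.sum_fin_three_pi_of_symmetric {α R : Type*} [Fintype α] [CommRing R]
    (f : (Fin 3 → α) → R) (hf : ∀ x (e : Equiv.Perm (Fin 3)), f (x ∘ e) = f x) (A B C : R)
    (hA : ∀ a, f ![a, a, a] = A) (hB : ∀ a b, a ≠ b → f ![a, a, b] = B)
    (hC : ∀ a b c, a ≠ b → a ≠ c → b ≠ c → f ![a, b, c] = C) :
    ∑ x, f x = Fintype.card α * A + 3 * Fintype.card α * (Fintype.card α - 1) * B +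
      Fintype.card α * (Fintype.card α - 1) * (Fintype.card α - 2) * C := by
  have hB' : ∀ a b, a ≠ b → f ![a, b, a] = B ∧ f ![b, a, a] = B := fun a b hab => by
    refine ⟨?_, ?_⟩
    · rw [← hB a b hab, ← hf _ (Equiv.swap 1 2)]
      congr 1; ext i; fin_cases i <;> rfl
    · rw [← hB a b hab, ← hf _ (Equiv.swap 0 2)]
      congr 1; ext i; fin_cases i <;> rfl
  have hdiag : ∀ a, ∑ c, f ![a, a, c] = A + (Fintype.card α - 1) * B := fun a => by
    rw [Fintype.sum_eq_sum_add_of_eq_off {a} _ B fun c hc => hB a c (Ne.symm (by simpa using hc))]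
    simp [hA]
  have hoff : ∀ a b, a ≠ b → ∑ c, f ![a, b, c] = 2 * B + (Fintype.card α - 2) * C :=
    fun a b hab => by
    rw [Fintype.sum_eq_sum_add_of_eq_off {a, b} _ C fun c hc => by
      simp only [mem_insert, mem_singleton, not_or] at hc
      exact hC a b c hab (Ne.symm hc.1) (Ne.symm hc.2)]
    rw [sum_pair hab, (hB' a b hab).1, (hB' b a (Ne.symm hab)).2, card_pair hab]
    push_cast
    ring
  have hrow : ∀ a, ∑ b, ∑ c, f ![a, b, c] =
      A + (Fintype.card α - 1) * B + (Fintype.card α - 1) * (2 * B + (Fintype.card α - 2) * C) :=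
    fun a => by
    rw [Fintype.sum_eq_sum_add_of_eq_off {a} _ _ fun b hb =>
      hoff a b (Ne.symm (by simpa using hb))]
    simp [hdiag]
  simp only [Fintype.sum_fin_succ_pi (n := 2), Fintype.sum_fin_succ_pi (n := 1),
    Fintype.sum_fin_succ_pi (n := 0), Fintype.sum_unique]
  change ∑ a, ∑ b, ∑ c, f ![a, b, c] = _
  simp only [hrow, sum_const, card_univ, nsmul_eq_mul]
  ring

noncomputable def colorCount {A α : Type*} [Fintype A] (x : A → α) (d : α) : ℕ :=
  #{a | x a = d}

theorem colorCount_comp_perm {A α : Type*} [Fintype A] (x : A → α) (e : Equiv.Perm A) :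
    colorCount (x ∘ e) = colorCount x := by
  funext d
  simp only [colorCount, card_filter, Function.comp_apply]
  exact Equiv.sum_comp e fun a => if x a = d then 1 else 0

theorem colorCount_fin_three {α : Type*} (a b c d : α) :
    colorCount ![a, b, c] d =
      (if a = d then 1 else 0) + (if b = d then 1 else 0) + (if c = d then 1 else 0) := by
  simp only [colorCount, card_filter, Fin.sum_univ_three]
  rfl

section colorCount

variable {α R : Type*} [Fintype α] [CommRing R] (g : ℕ → R)

theorem sum_comp_colorCount_of_range_subset {A : Type*} [Fintype A] (x : A → α)
    (s : Finset α) (hs : ∀ a, x a ∈ s) :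
    ∑ d, g (colorCount x d) = ∑ d ∈ s, g (colorCount x d) + (Fintype.card α - #s) * g 0 :=
  Fintype.sum_eq_sum_add_of_eq_off s _ _ fun d hd => by
    rw [colorCount, card_eq_zero.2 (filter_eq_empty_iff.2 fun a _ (h : x a = d) => hd (h ▸ hs a))]

theorem sum_comp_colorCount_const (a : α) :
    ∑ d, g (colorCount ![a, a, a] d) = g 3 + (Fintype.card α - 1) * g 0 := by
  rw [sum_comp_colorCount_of_range_subset g _ {a} fun i => by fin_cases i <;> simp]
  simp [colorCount_fin_three]

theorem sum_comp_colorCount_pair {a b : α} (hab : a ≠ b) :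
    ∑ d, g (colorCount ![a, a, b] d) = g 2 + g 1 + (Fintype.card α - 2) * g 0 := by
  rw [sum_comp_colorCount_of_range_subset g _ {a, b} fun i => by fin_cases i <;> simp]
  simp [colorCount_fin_three, sum_pair hab, card_pair hab, hab, hab.symm]

theorem sum_comp_colorCount_distinct {a b c : α} (hab : a ≠ b) (hac : a ≠ c) (hbc : b ≠ c) :
    ∑ d, g (colorCount ![a, b, c] d) = 3 * g 1 + (Fintype.card α - 3) * g 0 := by
  rw [sum_comp_colorCount_of_range_subset g _ {a, b, c} fun i => by fin_cases i <;> simp]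
  simp [colorCount_fin_three, sum_insert, card_insert_of_notMem, hab, hac, hbc, hab.symm,
    hac.symm, hbc.symm]
  ring

end colorCount

theorem monoEdges_completeBipartiteGraph {A B : Type} [Fintype A] [Fintype B] {q : ℕ}
    (x : A → Fin q) (y : B → Fin q) :
    monoEdges (completeBipartiteGraph A B) (Sum.elim x y) = ∑ b, colorCount x (y b) := by
  have hE : (completeBipartiteGraph A B).edgeFinset =
      univ.map ⟨fun p : A × B => s(Sum.inl p.1, Sum.inr p.2), fun p p' h => by
        simpa [Prod.ext_iff] using h⟩ := by
    ext e
    simp [SimpleGraph.edgeSet_completeBipartiteGraph]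
    rfl
  rw [monoEdges, hE, filter_map, card_map, card_filter, Fintype.sum_prod_type, sum_comm]
  simp only [colorCount, card_filter]
  rfl

noncomputable def pottsEnergySum {V : Type} [Fintype V] (G : SimpleGraph V) (q : ℕ) (β : ℝ) :
    ℝ :=
  ∑ σ : V → Fin q, (monoEdges G σ : ℝ) * Real.exp (-β * monoEdges G σ)

theorem pottsU_eq {V : Type} [Fintype V] (G : SimpleGraph V) (q : ℕ) (β : ℝ) :
    pottsU G q β = (Fintype.card V : ℝ)⁻¹ * pottsEnergySum G q β / pottsZ G q β :=
  rfl

theorem pottsEnergySum_completeBipartiteGraph (A B : Type) [Fintype A] [DecidableEq A]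
    [Fintype B] (q : ℕ) (β : ℝ) :
    pottsEnergySum (completeBipartiteGraph A B) q β =
      Fintype.card B * ∑ x : A → Fin q,
        (∑ d, colorCount x d * Real.exp (-β) ^ colorCount x d) *
          (∑ d, Real.exp (-β) ^ colorCount x d) ^ (Fintype.card B - 1) := by
  have hexp : ∀ n : ℕ, Real.exp (-β * n) = Real.exp (-β) ^ n := fun n => by
    rw [mul_comm, Real.exp_nat_mul]
  -- `Finset.sum_equiv` rather than `Fintype.sum_equiv`: the `Fintype` instance inside
  -- `pottsEnergySum` comes from the classical `DecidableEq V`, not the one synthesized here.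
  rw [pottsEnergySum, Finset.sum_equiv (Equiv.sumArrowEquivProdArrow A B (Fin q)) (t := univ)
    (g := fun p => (monoEdges (completeBipartiteGraph A B) (Sum.elim p.1 p.2) : ℝ) *
      Real.exp (-β * monoEdges (completeBipartiteGraph A B) (Sum.elim p.1 p.2)))
    (by simp) fun σ _ => by simp [Equiv.sumArrowEquivProdArrow], Fintype.sum_prod_type, mul_sum]
  refine Finset.sum_congr rfl fun x _ => ?_
  simp only [monoEdges_completeBipartiteGraph, hexp, ← prod_pow_eq_pow_sum]
  push_cast
  exact Fintype.sum_pi_sum_mul_prod (fun d => (colorCount x d : ℝ)) fun d =>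
    Real.exp (-β) ^ colorCount x d

theorem pottsEnergySum_K33 (q : ℕ) (β : ℝ) :
    pottsEnergySum (completeBipartiteGraph (Fin 3) (Fin 3)) q β =
      9 * q * (Real.exp (-β) ^ 3 * (Real.exp (-β) ^ 3 + (q : ℝ) - 1) ^ 2 +
          Real.exp (-β) * ((q : ℝ) - 1) * ((q : ℝ) - 2) *
            (3 * Real.exp (-β) + (q : ℝ) - 3) ^ 2 +
          ((q : ℝ) - 1) * (2 * Real.exp (-β) ^ 2 + Real.exp (-β)) *
            (Real.exp (-β) ^ 2 + Real.exp (-β) + (q : ℝ) - 2) ^ 2) := by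
  set t := Real.exp (-β)
  rw [pottsEnergySum_completeBipartiteGraph, Fintype.card_fin,
    Fintype.sum_fin_three_pi_of_symmetric _ (fun x e => by simp only [colorCount_comp_perm])
      (3 * t ^ 3 * (t ^ 3 + q - 1) ^ 2) ((2 * t ^ 2 + t) * (t ^ 2 + t + q - 2) ^ 2)
      (3 * t * (3 * t + q - 3) ^ 2)]
  · simp only [Fintype.card_fin]
    ring
  · intro a
    rw [sum_comp_colorCount_const (fun n : ℕ => (n : ℝ) * t ^ n),
      sum_comp_colorCount_const (fun n : ℕ => t ^ n)]
    simp only [Fintype.card_fin]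
    push_cast
    ring
  · intro a b hab
    rw [sum_comp_colorCount_pair (fun n : ℕ => (n : ℝ) * t ^ n) hab,
      sum_comp_colorCount_pair (fun n : ℕ => t ^ n) hab]
    simp only [Fintype.card_fin]
    push_cast
    ring
  · intro a b c hab hac hbc
    rw [sum_comp_colorCount_distinct (fun n : ℕ => (n : ℝ) * t ^ n) hab hac hbc,
      sum_comp_colorCount_distinct (fun n : ℕ => t ^ n) hab hac hbc]
    simp only [Fintype.card_fin]
    push_cast
    ring

theorem potts_internal_energy_K33_general (q : ℕ) (β : ℝ) :
    pottsU (completeBipartiteGraph (Fin 3) (Fin 3)) q β =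
      (3 * (q : ℝ) / (2 * pottsZ (completeBipartiteGraph (Fin 3) (Fin 3)) q β)) *
        (Real.exp (-β) ^ 3 * (Real.exp (-β) ^ 3 + (q : ℝ) - 1) ^ 2 +
          Real.exp (-β) * ((q : ℝ) - 1) * ((q : ℝ) - 2) *
            (3 * Real.exp (-β) + (q : ℝ) - 3) ^ 2 +
          ((q : ℝ) - 1) * (2 * Real.exp (-β) ^ 2 + Real.exp (-β)) *
            (Real.exp (-β) ^ 2 + Real.exp (-β) + (q : ℝ) - 2) ^ 2) := by
  rw [pottsU_eq, pottsEnergySum_K33]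
  simp only [Fintype.card_sum, Fintype.card_fin]
  ring

theorem potts_internal_energy_K33 (q : ℕ) (hq : 2 ≤ q) (β : ℝ) :
    pottsU (completeBipartiteGraph (Fin 3) (Fin 3)) q β =
      (3 * (q : ℝ) / (2 * pottsZ (completeBipartiteGraph (Fin 3) (Fin 3)) q β)) *
        (Real.exp (-β) ^ 3 * (Real.exp (-β) ^ 3 + (q : ℝ) - 1) ^ 2 +
          Real.exp (-β) * ((q : ℝ) - 1) * ((q : ℝ) - 2) *
            (3 * Real.exp (-β) + (q : ℝ) - 3) ^ 2 +
          ((q : ℝ) - 1) * (2 * Real.exp (-β) ^ 2 + Real.exp (-β)) *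
            (Real.exp (-β) ^ 2 + Real.exp (-β) + (q : ℝ) - 2) ^ 2) :=
  potts_internal_energy_K33_general q β
end
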